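/- arXiv:math/0503464 — 2 statements merged into one kernel-verified Lean document; each statement's English description precedes it below -/
import Mathlib

section
/- Let σ be a permutation of {1,…,n} and let v₁,…,vₙ and w₁,…,wₙ be integers (degrees). Then the sum Σ_{i>j} v_i·w_j + Σ_{i<j, σ(i)>σ(j)} (w_{σ(i)}·v_{σ(j)} + v_{σ(i)}·w_{σ(j)}) + Σ_{i>j} v_{σ(i)}·w_{σ(j)} is congruent to 0 modulo 2. -/
/-!
Write `g a b = v a * w b`. Reindexing by `σ`, the third sum `Σ_{i>j} g (σ i) (σ j)` agrees with the
first sum `Σ_{a>b} g a b` except on the inversions `i < j`, `σ j < σ i` of `σ`, where the two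
arguments of `g` come in swapped order. The middle sum runs over exactly these inversions and
contains both orders, so the whole expression equals `2 * (Σ_{a>b} g a b + Σ_{inv} g (σ j) (σ i))`.
-/

open Finset Equiv

variable {α M : Type*} [LinearOrder α] [Fintype α] [AddCommGroup M]

theorem sum_filter_lt_eq_sum_filter_perm_lt_add_sub (σ : Perm α) (f : α × α → M) :
    ∑ p ∈ univ.filter (fun p : α × α => p.2 < p.1), f p
      = ∑ p ∈ univ.filter (fun p : α × α => σ p.2 < σ p.1), f p
        + ∑ p ∈ univ.filter (fun p : α × α => p.2 < p.1 ∧ σ p.1 < σ p.2), f p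
        - ∑ p ∈ univ.filter (fun p : α × α => p.1 < p.2 ∧ σ p.2 < σ p.1), f p := by
  simp only [sum_filter, ← sum_add_distrib, ← sum_sub_distrib]
  refine sum_congr rfl fun ⟨i, j⟩ _ => ?_
  -- on the diagonal every indicator vanishes; off it, `σ i ≠ σ j` by injectivity
  split_ifs <;> grind [σ.injective.eq_iff]

theorem sum_lt_comp_perm_eq_sum_lt_add_sum_inversions (σ : Perm α) (g : α → α → M) :
    ∑ p ∈ univ.filter (fun p : α × α => p.2 < p.1), g (σ p.1) (σ p.2)
      = ∑ p ∈ univ.filter (fun p : α × α => p.2 < p.1), g p.1 p.2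
        + ∑ p ∈ univ.filter (fun p : α × α => p.1 < p.2 ∧ σ p.2 < σ p.1),
            (g (σ p.2) (σ p.1) - g (σ p.1) (σ p.2)) := by
  have hreindex : ∑ p ∈ univ.filter (fun p : α × α => p.2 < p.1), g p.1 p.2
      = ∑ p ∈ univ.filter (fun p : α × α => σ p.2 < σ p.1), g (σ p.1) (σ p.2) :=
    (sum_equiv (prodCongr σ σ) (by simp) (by simp)).symm
  have hswap :
      ∑ p ∈ univ.filter (fun p : α × α => p.2 < p.1 ∧ σ p.1 < σ p.2), g (σ p.1) (σ p.2)
        = ∑ p ∈ univ.filter (fun p : α × α => p.1 < p.2 ∧ σ p.2 < σ p.1), g (σ p.2) (σ p.1) :=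
    sum_equiv (prodComm α α) (by simp) (by simp)
  rw [sum_filter_lt_eq_sum_filter_perm_lt_add_sub σ, hreindex, hswap, sum_sub_distrib]
  abel

/-- Lemma 5.4(1) of Daily–Lada, "Symmetrization of Brace Algebras":
for a permutation `σ ∈ Sₙ` and integer degrees `v, w : Fin n → ℤ`,
`Σ_{i>j} v_i w_j + Σ_{i<j, σ(i)>σ(j)} (w_{σ(i)} v_{σ(j)} + v_{σ(i)} w_{σ(j)})
  + Σ_{i>j} v_{σ(i)} w_{σ(j)} ≡ 0 (mod 2)`. -/
theorem daily_lada_lemma_5_4_1 (n : ℕ) (σ : Equiv.Perm (Fin n)) (v w : Fin n → ℤ) :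
    (∑ p ∈ Finset.univ.filter (fun p : Fin n × Fin n => p.2 < p.1), v p.1 * w p.2)
      + (∑ p ∈ Finset.univ.filter (fun p : Fin n × Fin n => p.1 < p.2 ∧ σ p.2 < σ p.1),
          (w (σ p.1) * v (σ p.2) + v (σ p.1) * w (σ p.2)))
      + (∑ p ∈ Finset.univ.filter (fun p : Fin n × Fin n => p.2 < p.1), v (σ p.1) * w (σ p.2))
      ≡ 0 [ZMOD 2] := by
  rw [sum_lt_comp_perm_eq_sum_lt_add_sum_inversions σ (fun a b => v a * w b),
    Int.modEq_zero_iff_dvd]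
  have hinversions :
      ∑ p ∈ univ.filter (fun p : Fin n × Fin n => p.1 < p.2 ∧ σ p.2 < σ p.1),
          (w (σ p.1) * v (σ p.2) + v (σ p.1) * w (σ p.2))
        + ∑ p ∈ univ.filter (fun p : Fin n × Fin n => p.1 < p.2 ∧ σ p.2 < σ p.1),
          (v (σ p.2) * w (σ p.1) - v (σ p.1) * w (σ p.2))
      = 2 * ∑ p ∈ univ.filter (fun p : Fin n × Fin n => p.1 < p.2 ∧ σ p.2 < σ p.1),
          v (σ p.2) * w (σ p.1) := by
    rw [← sum_add_distrib, mul_sum]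
    exact sum_congr rfl fun _ _ => by ring
  exact ⟨∑ p ∈ univ.filter (fun p : Fin n × Fin n => p.2 < p.1), v p.1 * w p.2
    + ∑ p ∈ univ.filter (fun p : Fin n × Fin n => p.1 < p.2 ∧ σ p.2 < σ p.1),
        v (σ p.2) * w (σ p.1), by linear_combination hinversions⟩
end

section
/- Let σ be a permutation of {1,…,n} and let v₁,…,vₙ be integers. Then Σ_{i<j, σ(i)>σ(j)} (v_{σ(i)} + v_{σ(j)}) ≡ Σ_i (i−1)·v_i + Σ_i (i−1)·v_{σ(i)} (mod 2). -/
/-!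
Grouping the inversion sum by index, `v (σ i)` is counted once for every inversion that
contains `i`. Among the `j ≠ i`, let `a`, `b`, `c` count those with `j < i, σ j > σ i`,
`j > i, σ j < σ i` and `j < i, σ j < σ i`; then `i = a + c` and `σ i = b + c`, so `i` lies in
`a + b = i + σ i - 2c ≡ i + σ i` inversions, and reindexing `∑ i * v i` by `σ` gives the
right-hand side.
-/

open Finset

theorem Finset.card_filter_lt_add_card_filter_gt {α β : Type*} [LinearOrder β] (s : Finset α)
    (g : α → β) (b : β) (hb : ∀ j ∈ s, g j ≠ b) :
    #{j ∈ s | g j < b} + #{j ∈ s | b < g j} = #s := by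
  rw [← card_filter_add_card_filter_not (s := s) (fun j => g j < b)]
  congr 2
  refine filter_congr fun j hj => ?_
  exact ⟨fun h => not_lt.2 h.le, fun h => lt_of_le_of_ne (not_lt.1 h) (hb j hj).symm⟩

theorem Finset.sum_filter_prod_add_eq_sum_card_smul {α M : Type*} [Fintype α] [AddCommMonoid M]
    (r : α → α → Prop) [DecidableRel r] (w : α → M) :
    ∑ p ∈ univ.filter (fun p : α × α => r p.1 p.2), (w p.1 + w p.2)
      = ∑ i, (#{j | r i j} + #{j | r j i}) • w i := by
  simp only [sum_add_distrib, add_smul, sum_filter, Fintype.sum_prod_type]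
  rw [sum_comm (f := fun x y => if r x y then w y else 0)]
  simp only [← sum_filter, sum_const]

theorem Equiv.card_inversions_at_add_two_mul {α β : Type*} [LinearOrder α] [LinearOrder β]
    [Fintype α] [Fintype β] (σ : α ≃ β) (i : α) :
    #{j | i < j ∧ σ j < σ i} + #{j | j < i ∧ σ i < σ j} + 2 * #{j | j < i ∧ σ j < σ i}
      = #{j | j < i} + #{k | k < σ i} := by
  have below_i := card_filter_lt_add_card_filter_gt {j | j < i} σ (σ i)
    fun j hj => σ.injective.ne (mem_filter.1 hj).2.ne
  have below_σi := card_filter_lt_add_card_filter_gt {j | σ j < σ i} id i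
    fun j hj hji => (mem_filter.1 hj).2.ne (congrArg σ hji)
  have hσ : #{j | σ j < σ i} = #{k | k < σ i} := by
    rw [card_filter, card_filter, ← σ.sum_comp]
  simp only [filter_filter, id] at below_i below_σi
  rw [← below_i, ← hσ, ← below_σi]
  simp only [and_comm]
  omega

/-- Lemma 5.4(2) of Daily–Lada, "Symmetrization of Brace Algebras":
for a permutation `σ ∈ Sₙ` and integers `v : Fin n → ℤ`,
`Σ_{i<j, σ(i)>σ(j)} (v_{σ(i)} + v_{σ(j)}) ≡ Σ_i (i−1) v_i + Σ_i (i−1) v_{σ(i)} (mod 2)`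
(here indices are 0-based, so the weight `i−1` of the 1-based statement becomes `i.val`). -/
theorem daily_lada_lemma_5_4_2 (n : ℕ) (σ : Equiv.Perm (Fin n)) (v : Fin n → ℤ) :
    (∑ p ∈ Finset.univ.filter (fun p : Fin n × Fin n => p.1 < p.2 ∧ σ p.2 < σ p.1),
        (v (σ p.1) + v (σ p.2)))
      ≡ (∑ i : Fin n, (i.val : ℤ) * v i) + ∑ i : Fin n, (i.val : ℤ) * v (σ i) [ZMOD 2] := by
  have card_lt (k : Fin n) : #{j | j < k} = k.val := by rw [filter_gt_eq_Iio, Fin.card_Iio]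
  calc _ = ∑ i, ((#{j | i < j ∧ σ j < σ i} + #{j | j < i ∧ σ i < σ j} : ℕ) : ℤ)
          * v (σ i) := by
        rw [sum_filter_prod_add_eq_sum_card_smul (fun i j => i < j ∧ σ j < σ i)
          (fun i => v (σ i))]
        simp
    _ ≡ ∑ i, ((i.val + (σ i).val : ℕ) : ℤ) * v (σ i) [ZMOD 2] := by
        refine Int.ModEq.sum fun i _ => Int.ModEq.mul_right _ ?_
        rw [← card_lt i, ← card_lt (σ i), ← σ.card_inversions_at_add_two_mul i]
        simp [Int.ModEq, Int.add_mul_emod_self_left]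
    _ = _ := by
        rw [← Equiv.sum_comp σ (fun k => (k.val : ℤ) * v k), ← sum_add_distrib]
        push_cast
        simp only [add_mul, add_comm]
end
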